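/- Let T be a Hausdorff topological space and d ≥ 1 an integer. Let q : Sym^{d−1}(T) × T → Sym^d(T) be the map ({x_1,…,x_{d−1}}, x) ↦ {x_1,…,x_{d−1}, x}, and let PConf_d(T) = q^{−1}(UConf_d(T)), the space of d-element subsets of T with one distinguished point. Then the restriction r : PConf_d(T) → UConf_d(T) of q is a d-fold covering map. -/

import Mathlib

/-- The setoid on `Fin d → T` identifying tuples that differ by a permutation. -/
def symSetoid (T : Type*) (d : ℕ) : Setoid (Fin d → T) where
  r f g := ∃ σ : Equiv.Perm (Fin d), f ∘ σ = g
  iseqv := by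
    refine ⟨fun f => ⟨Equiv.refl _, rfl⟩, ?_, ?_⟩
    · rintro f g ⟨σ, rfl⟩
      exact ⟨σ.symm, by funext i; simp⟩
    · rintro f g h ⟨σ, rfl⟩ ⟨τ, rfl⟩
      exact ⟨τ.trans σ, rfl⟩

/-- The `d`-th symmetric power of `T`: the quotient of `T^d` by the permutation action of the
symmetric group `S_d`. -/
def SymPow (T : Type*) (d : ℕ) : Type _ := Quotient (symSetoid T d)

instance SymPow.instTopologicalSpace (T : Type*) [TopologicalSpace T] (d : ℕ) :
    TopologicalSpace (SymPow T d) :=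
  instTopologicalSpaceQuotient

/-- The quotient map `T^d → Sym^d(T)`. -/
def SymPow.mk {T : Type*} {d : ℕ} (f : Fin d → T) : SymPow T d := Quotient.mk _ f

/-- A point of `Sym^d(T)` is simple if it is the class of an injective tuple, i.e. it lies in
the complement `UConf_d(T)` of the image `Σ` of the big diagonal. -/
def SymPow.Simple {T : Type*} {d : ℕ} (x : SymPow T d) : Prop :=
  ∃ f : Fin d → T, Function.Injective f ∧ SymPow.mk f = x

/-- The unordered configuration space `UConf_d(T) = Sym^d(T) ∖ Σ`, the space of `d`-element
subsets of `T`. -/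
def UConf (T : Type*) [TopologicalSpace T] (d : ℕ) : Type _ :=
  {x : SymPow T d // x.Simple}

instance UConf.instTopologicalSpace (T : Type*) [TopologicalSpace T] (d : ℕ) :
    TopologicalSpace (UConf T d) :=
  inferInstanceAs (TopologicalSpace {x : SymPow T d // x.Simple})

/-!
Over a simple point `mk f` choose pairwise disjoint open neighbourhoods `U i` of the points
`f i`. Every point of `W = mk '' (∏ U i)` has exactly one ordered representative in `∏ U i`,
so `q⁻¹(W)` is the disjoint union of the `d` sheets `{z | q z ∈ W ∧ z.2 ∈ U i}`, each mapped
bijectively onto `W`. The map `q` is continuous and open because it lifts, through the open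
quotient maps `mk`, to the homeomorphism `(g, x) ↦ Fin.snoc g x`; hence each sheet is mapped
homeomorphically onto `W`. The fibre over a simple point is the fibre `Fin d` of this
trivialization.
-/

open Function Set Bundle

theorem Equiv.Perm.exists_succAbove_eq {d : ℕ} (σ : Equiv.Perm (Fin (d + 1))) :
    ∃ τ : Equiv.Perm (Fin d), ∀ j, (σ (Fin.last d)).succAbove (τ j) = σ j.castSucc :=
  ⟨(finSuccAboveEquiv (Fin.last d)).trans
    ((σ.subtypeEquiv (q := (· ≠ σ (Fin.last d))) fun _ => σ.injective.ne_iff.symm).trans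
      (finSuccAboveEquiv (σ (Fin.last d))).symm), fun j => by
      simp only [Equiv.trans_apply, finSuccAboveEquiv_apply, Equiv.subtypeEquiv_apply,
        Fin.succAbove_last]
      exact congrArg Subtype.val ((finSuccAboveEquiv _).apply_symm_apply _)⟩

def snocHomeomorph (T : Type*) [TopologicalSpace T] (m : ℕ) :
    (Fin m → T) × T ≃ₜ (Fin (m + 1) → T) where
  toFun p := Fin.snoc p.1 p.2
  invFun f := (Fin.init f, f (Fin.last m))
  left_inv p := by simp
  right_inv f := Fin.snoc_init_self f
  continuous_toFun := Continuous.finSnoc (A := fun _ => T) continuous_fst continuous_snd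
  continuous_invFun := by fun_prop

namespace SymPow

variable {T : Type*} {d m : ℕ}

theorem mk_eq_mk_iff {f g : Fin d → T} :
    mk f = mk g ↔ ∃ σ : Equiv.Perm (Fin d), f ∘ σ = g :=
  Quotient.eq

theorem mk_comp_perm (f : Fin d → T) (σ : Equiv.Perm (Fin d)) : mk (f ∘ σ) = mk f :=
  Quotient.sound ⟨σ.symm, by simp [Function.comp_assoc]⟩

theorem mk_surjective : Surjective (mk : (Fin d → T) → SymPow T d) :=
  Quotient.mk_surjective

theorem mk_insertNth (p : Fin (d + 1)) (a : T) (g : Fin d → T) :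
    mk (p.insertNth a g) = mk (Fin.cons a g) := by
  rw [← Fin.insertNth_comp_cycleRange_symm p a g, mk_comp_perm]

theorem mk_snoc_removeNth (f : Fin (d + 1) → T) (i : Fin (d + 1)) :
    mk (Fin.snoc (i.removeNth f) (f i)) = mk f := by
  rw [← Fin.insertNth_last', mk_insertNth, ← mk_insertNth i, Fin.insertNth_self_removeNth]

theorem exists_eq_of_mk_snoc_eq {g : Fin d → T} {x : T} {f : Fin (d + 1) → T}
    (h : mk (Fin.snoc g x) = mk f) : ∃ i, f i = x ∧ mk g = mk (i.removeNth f) := by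
  obtain ⟨σ, hσ⟩ := mk_eq_mk_iff.mp h.symm
  obtain ⟨τ, hτ⟩ := σ.exists_succAbove_eq
  refine ⟨σ (Fin.last d), by simpa using congrFun hσ (Fin.last d), ?_⟩
  have hg : g = (σ (Fin.last d)).removeNth f ∘ τ := funext fun j => by
    simpa [Fin.removeNth_apply, hτ] using (congrFun hσ j.castSucc).symm
  rw [hg, mk_comp_perm]

section Topology

variable [TopologicalSpace T]

theorem isOpenMap_mk : IsOpenMap (mk : (Fin d → T) → SymPow T d) := by
  intro O hO
  have hsat : mk ⁻¹' (mk '' O) = ⋃ σ : Equiv.Perm (Fin d), (· ∘ σ) ⁻¹' O := by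
    ext g
    simp only [mem_preimage, mem_image, mem_iUnion]
    constructor
    · rintro ⟨h, hhO, hh⟩
      obtain ⟨σ, rfl⟩ := mk_eq_mk_iff.mp hh.symm
      exact ⟨σ, hhO⟩
    · rintro ⟨σ, hσ⟩
      exact ⟨g ∘ σ, hσ, mk_comp_perm g σ⟩
  refine isQuotientMap_quotient_mk'.isOpen_preimage.mp ?_
  change IsOpen (mk ⁻¹' (mk '' O))
  rw [hsat]
  exact isOpen_iUnion fun σ => hO.preimage (continuous_pi fun i => continuous_apply (σ i))

theorem isOpenQuotientMap_mk : IsOpenQuotientMap (mk : (Fin d → T) → SymPow T d) :=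
  ⟨mk_surjective, continuous_quotient_mk', isOpenMap_mk⟩

end Topology

section InsertPoint

variable {q : SymPow T m × T → SymPow T (m + 1)}
  (hq : ∀ (g : Fin m → T) (x : T), q (mk g, x) = mk (Fin.snoc g x))
include hq

theorem apply_mk_removeNth (f : Fin (m + 1) → T) (i : Fin (m + 1)) :
    q (mk (i.removeNth f), f i) = mk f := by
  rw [hq, mk_snoc_removeNth]

theorem exists_eq_of_apply_eq_mk {z : SymPow T m × T} {f : Fin (m + 1) → T} (h : q z = mk f) :
    ∃ i, z = (mk (i.removeNth f), f i) := by
  obtain ⟨⟨g, x⟩, rfl⟩ := (mk_surjective.prodMap surjective_id) z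
  obtain ⟨i, hx, hg⟩ := exists_eq_of_mk_snoc_eq ((hq g x).symm.trans h)
  exact ⟨i, Prod.ext hg hx.symm⟩

theorem eq_of_apply_eq_mk_of_mem_pi {U : Fin (m + 1) → Set T} (hU : Pairwise (Disjoint on U))
    {z : SymPow T m × T} {f : Fin (m + 1) → T} (h : q z = mk f) (hf : f ∈ univ.pi U)
    {i : Fin (m + 1)} (hi : z.2 ∈ U i) : z = (mk (i.removeNth f), f i) := by
  obtain ⟨j, rfl⟩ := exists_eq_of_apply_eq_mk hq h
  obtain rfl : j = i := by_contra fun hne => (hU hne).ne_of_mem (hf j trivial) hi rfl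
  rfl

variable [TopologicalSpace T]

theorem comp_prodMap_mk_id : q ∘ Prod.map mk id = mk ∘ snocHomeomorph T m :=
  funext fun ⟨g, x⟩ => hq g x

theorem continuous_of_apply_mk : Continuous q := by
  rw [← (isOpenQuotientMap_mk.prodMap .id).continuous_comp_iff, comp_prodMap_mk_id hq]
  exact continuous_quotient_mk'.comp (snocHomeomorph T m).continuous

theorem isOpenMap_of_apply_mk : IsOpenMap q := by
  rw [(isOpenQuotientMap_mk.prodMap .id).isOpenMap_iff, comp_prodMap_mk_id hq]
  exact isOpenMap_mk.comp (snocHomeomorph T m).isOpenMap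

theorem exists_trivialization_baseSet_eq [Nonempty T] {U : Fin (m + 1) → Set T}
    (hUo : ∀ i, IsOpen (U i)) (hUd : Pairwise (Disjoint on U)) :
    ∃ t : Trivialization (Fin (m + 1)) q, t.baseSet = mk '' univ.pi U := by
  have : Nonempty (SymPow T (m + 1) → SymPow T m × T) :=
    ⟨fun _ => (mk fun _ => Classical.ofNonempty, Classical.ofNonempty)⟩
  set W := mk '' univ.pi U
  have hW : IsOpen W := isOpenMap_mk _ (isOpen_set_pi finite_univ fun i _ => hUo i)
  set S : Fin (m + 1) → Set (SymPow T m × T) := fun i => q ⁻¹' W ∩ Prod.snd ⁻¹' U i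
  have hS : ∀ i, IsOpen (S i) := fun i =>
    (hW.preimage (continuous_of_apply_mk hq)).inter ((hUo i).preimage continuous_snd)
  have surj : ∀ i, SurjOn q (S i) W := by
    rintro i - ⟨f, hf, rfl⟩
    refine ⟨_, ⟨?_, hf i trivial⟩, apply_mk_removeNth hq f i⟩
    rw [mem_preimage, apply_mk_removeNth hq]
    exact mem_image_of_mem mk hf
  refine ⟨hW.trivializationDiscrete S W (fun i W' hW' => ⟨fun h => ?_, fun h => ?_⟩) ?_ surj
    (fun i j hij => ((hUd hij).preimage Prod.snd).mono inter_subset_right inter_subset_right)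
    ?_, rfl⟩
  · exact (h.preimage (continuous_of_apply_mk hq)).inter (hS i)
  · have := isOpenMap_of_apply_mk hq _ h
    rwa [image_preimage_inter, inter_eq_left.mpr (hW'.trans (surj i))] at this
  · rintro i z ⟨⟨f, hf, hfz⟩, hz⟩ z' ⟨-, hz'⟩ hzz'
    rw [eq_of_apply_eq_mk_of_mem_pi hq hUd hfz.symm hf hz,
      eq_of_apply_eq_mk_of_mem_pi hq hUd (hzz'.symm.trans hfz.symm) hf hz']
  · rintro z ⟨f, hf, hfz⟩
    obtain ⟨i, rfl⟩ := exists_eq_of_apply_eq_mk hq hfz.symm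
    exact mem_iUnion.mpr ⟨i, ⟨f, hf, hfz⟩, hf i trivial⟩

theorem exists_trivialization_mem_baseSet [T2Space T] {y : SymPow T (m + 1)} (hy : y.Simple) :
    ∃ t : Trivialization (Fin (m + 1)) q, y ∈ t.baseSet := by
  obtain ⟨f, hf, rfl⟩ := hy
  obtain ⟨U, hU, hUd⟩ := (finite_range f).t2_separation
  have : Nonempty T := ⟨f 0⟩
  obtain ⟨t, ht⟩ := exists_trivialization_baseSet_eq hq (U := U ∘ f) (fun i => (hU (f i)).2)
    fun i j hij => hUd (mem_range_self i) (mem_range_self j) (hf.ne hij)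
  exact ⟨t, ht ▸ mem_image_of_mem mk fun i _ => (hU (f i)).1⟩

end InsertPoint

end SymPow

/-- For a Hausdorff space `T` and `d = m + 1 ≥ 1`, the map
`q : Sym^{d-1}(T) × T → Sym^d(T)`, `({x_1,…,x_{d-1}}, x) ↦ {x_1,…,x_{d-1},x}`, restricted to
`PConf_d(T) = q⁻¹(UConf_d(T))`, is a `d`-fold covering map over `UConf_d(T)`. -/
theorem stmt1 (T : Type*) [TopologicalSpace T] [T2Space T] (m : ℕ)
    (q : SymPow T m × T → SymPow T (m + 1))
    (hq : ∀ (g : Fin m → T) (x : T), q (SymPow.mk g, x) = SymPow.mk (Fin.snoc g x)) :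
    IsCoveringMap
      (fun z : {z : SymPow T m × T // (q z).Simple} =>
        (⟨q z.1, z.2⟩ : UConf T (m + 1))) ∧
    ∀ y : UConf T (m + 1),
      Nat.card {z : {z : SymPow T m × T // (q z).Simple} // q z.1 = y.1} = m + 1 := by
  choose t ht using fun y : UConf T (m + 1) => SymPow.exists_trivialization_mem_baseSet hq y.2
  refine ⟨(IsCoveringMapOn.mk q {x | x.Simple} _ t ht).isCoveringMap_restrictPreimage,
    fun y => ?_⟩
  exact (Nat.card_congr ((Equiv.subtypeSubtypeEquivSubtype fun h => h ▸ y.2).trans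
    ((t y).preimageSingletonHomeomorph (ht y)).toEquiv)).trans (Nat.card_fin _)
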